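/- arXiv:1808.04515 — 2 statements merged into one kernel-verified Lean document; each statement's English description precedes it below -/
import Mathlib

section
/- Let X ∈ ℝ^{n×m} and let k ≥ rank(X). Then the infimum of (1/2)(‖L‖_F² + ‖R‖_F²) over all factorizations L ∈ ℝ^{n×k}, R ∈ ℝ^{m×k} with X = L Rᵀ is attained and equals ‖X‖_*. -/
open Matrix

/-- Frobenius norm of a real matrix. -/
noncomputable def frobNorm {n m : ℕ} (X : Matrix (Fin n) (Fin m) ℝ) : ℝ :=
  Real.sqrt (∑ i, ∑ j, (X i j) ^ 2)

/-- Nuclear norm of a real matrix: the sum of its singular values, i.e. the square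
roots of the eigenvalues of the positive semidefinite matrix `Xᵀ X` (over `ℝ`,
`Xᴴ = Xᵀ`). -/
noncomputable def nucNorm {n m : ℕ} (X : Matrix (Fin n) (Fin m) ℝ) : ℝ :=
  ∑ j, Real.sqrt ((Matrix.isHermitian_conjTranspose_mul_self X).eigenvalues j)

/-- Euclidean (l²) norm on `ℝ^q`. -/
noncomputable def l2 {q : ℕ} (v : Fin q → ℝ) : ℝ :=
  Real.sqrt (∑ i, (v i) ^ 2)

/-! Diagonalise `XᵀX = Q diag(μ) Qᵀ` with `Q` orthogonal: the columns `y_j` of `Y = XQ` are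
orthogonal with `‖y_j‖² = μ_j`, and `‖X‖_* = ∑ √μ_j`.

Lower bound: if `X = L Rᵀ` and `P = Y diag(μ^{-1/2})`, then
`∑ √μ_j = tr(Pᵀ X Q) = tr((Pᵀ L) (Qᵀ R)ᵀ) ≤ ½ (‖Pᵀ L‖² + ‖Qᵀ R‖²) ≤ ½ (‖L‖² + ‖R‖²)`,
the last step because `P` and `Q` are partial isometries.

Attainment: the balanced factorization `X = (Y diag(μ^{-1/4})) (Q diag(μ^{1/4}))ᵀ` has both
Frobenius norms squared equal to `∑ √μ_j`, and its only nonzero columns are the `rank X ≤ k`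
columns with `μ_j ≠ 0`, which fit into `k` columns. -/

section

variable {n m k r : ℕ}

lemma frobNorm_nonneg (M : Matrix (Fin n) (Fin m) ℝ) : 0 ≤ frobNorm M :=
  Real.sqrt_nonneg _

lemma frobNorm_sq_eq_trace (M : Matrix (Fin n) (Fin m) ℝ) : frobNorm M ^ 2 = (Mᵀ * M).trace := by
  rw [frobNorm, Real.sq_sqrt (by positivity), trace, Finset.sum_comm]
  simp [mul_apply, sq]

lemma frobNorm_mul_diagonal_sq (Y : Matrix (Fin n) (Fin m) ℝ) (w : Fin m → ℝ) :
    frobNorm (Y * diagonal w) ^ 2 = ∑ j, w j ^ 2 * (Yᵀ * Y) j j := by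
  rw [frobNorm_sq_eq_trace, transpose_mul, diagonal_transpose, trace]
  refine Finset.sum_congr rfl fun j _ => ?_
  rw [diag_apply, Matrix.mul_assoc, ← Matrix.mul_assoc Yᵀ, diagonal_mul, mul_diagonal]
  ring

/-- `P Pᵀ` is an orthogonal projection when `P` is a partial isometry. -/
lemma frobNorm_sq_eq_add_of_mul_transpose_mul_self {P : Matrix (Fin n) (Fin r) ℝ}
    (hP : P * Pᵀ * P = P) (L : Matrix (Fin n) (Fin k) ℝ) :
    frobNorm L ^ 2 = frobNorm (Pᵀ * L) ^ 2 + frobNorm ((1 - P * Pᵀ) * L) ^ 2 := by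
  have hproj : (1 - P * Pᵀ)ᵀ * (1 - P * Pᵀ) = 1 - P * Pᵀ := by
    have hP' : P * Pᵀ * (P * Pᵀ) = P * Pᵀ := by rw [← Matrix.mul_assoc, hP]
    simp only [transpose_sub, transpose_one, transpose_mul, transpose_transpose, sub_mul, mul_sub,
      Matrix.one_mul, Matrix.mul_one, hP']
    abel
  simp only [frobNorm_sq_eq_trace, transpose_mul, transpose_transpose]
  rw [Matrix.mul_assoc Lᵀ (1 - P * Pᵀ)ᵀ, ← Matrix.mul_assoc (1 - P * Pᵀ)ᵀ, hproj]
  simp only [Matrix.mul_sub, Matrix.sub_mul, Matrix.one_mul, trace_sub, Matrix.mul_assoc]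
  ring

lemma frobNorm_transpose_mul_sq_le {P : Matrix (Fin n) (Fin r) ℝ} (hP : P * Pᵀ * P = P)
    (L : Matrix (Fin n) (Fin k) ℝ) : frobNorm (Pᵀ * L) ^ 2 ≤ frobNorm L ^ 2 := by
  rw [frobNorm_sq_eq_add_of_mul_transpose_mul_self hP L]
  exact le_add_of_nonneg_right (sq_nonneg _)

lemma trace_mul_transpose_le (A B : Matrix (Fin n) (Fin m) ℝ) :
    (A * Bᵀ).trace ≤ (1 / 2) * (frobNorm A ^ 2 + frobNorm B ^ 2) := by
  have h := sq_nonneg (frobNorm (A - B))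
  simp only [frobNorm_sq_eq_trace] at h ⊢
  have hBA : (Bᵀ * A).trace = (A * Bᵀ).trace := trace_mul_comm _ _
  have hAB : (Aᵀ * B).trace = (A * Bᵀ).trace := by
    rw [← hBA, ← trace_transpose, transpose_mul, transpose_transpose]
  simp only [transpose_sub, Matrix.sub_mul, Matrix.mul_sub, trace_sub, hBA, hAB] at h
  linarith

lemma exists_mul_transpose_eq_diagonal_indicator (s : Finset (Fin r)) (hs : s.card ≤ k) :
    ∃ P : Matrix (Fin r) (Fin k) ℝ, P * Pᵀ = diagonal fun j => if j ∈ s then 1 else 0 := by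
  obtain ⟨e⟩ : Nonempty (s ↪ Fin k) :=
    Function.Embedding.nonempty_of_card_le (by simpa using hs)
  refine ⟨of fun j c => if h : j ∈ s then if e ⟨j, h⟩ = c then 1 else 0 else 0, ?_⟩
  ext j j'
  by_cases hj : j ∈ s <;> by_cases hj' : j' ∈ s <;>
    simp [mul_apply, hj, hj', diagonal_apply, e.injective.eq_iff]
  exact ne_of_mem_of_not_mem hj hj'

lemma frobNorm_mul_eq_of_mul_mul_transpose_eq {M : Matrix (Fin n) (Fin r) ℝ}
    {P : Matrix (Fin r) (Fin k) ℝ} (h : M * (P * Pᵀ) = M) : frobNorm (M * P) = frobNorm M := by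
  rw [← sq_eq_sq₀ (frobNorm_nonneg _) (frobNorm_nonneg _), frobNorm_sq_eq_trace,
    frobNorm_sq_eq_trace, transpose_mul, Matrix.mul_assoc, trace_mul_comm, Matrix.mul_assoc,
    Matrix.mul_assoc M, h]

lemma exists_factorization_of_columns_eq_zero {L₀ : Matrix (Fin n) (Fin r) ℝ}
    {R₀ : Matrix (Fin m) (Fin r) ℝ} {s : Finset (Fin r)} (hs : s.card ≤ k)
    (hL : ∀ i, ∀ j ∉ s, L₀ i j = 0) (hR : ∀ i, ∀ j ∉ s, R₀ i j = 0) :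
    ∃ (L : Matrix (Fin n) (Fin k) ℝ) (R : Matrix (Fin m) (Fin k) ℝ),
      L * Rᵀ = L₀ * R₀ᵀ ∧ frobNorm L = frobNorm L₀ ∧ frobNorm R = frobNorm R₀ := by
  obtain ⟨P, hP⟩ := exists_mul_transpose_eq_diagonal_indicator s hs
  have hfix : ∀ {p} (M : Matrix (Fin p) (Fin r) ℝ), (∀ i, ∀ j ∉ s, M i j = 0) →
      M * (P * Pᵀ) = M := by
    intro p M hM
    ext i j
    by_cases hj : j ∈ s <;> simp [hP, hj, hM i j]
  refine ⟨L₀ * P, R₀ * P, ?_, frobNorm_mul_eq_of_mul_mul_transpose_eq (hfix L₀ hL),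
    frobNorm_mul_eq_of_mul_mul_transpose_eq (hfix R₀ hR)⟩
  rw [transpose_mul, Matrix.mul_assoc, ← Matrix.mul_assoc P, ← Matrix.mul_assoc L₀, hfix L₀ hL]

lemma nonneg_of_transpose_mul_self_eq_diagonal {Y : Matrix (Fin n) (Fin m) ℝ} {μ : Fin m → ℝ}
    (h : Yᵀ * Y = diagonal μ) (j : Fin m) : 0 ≤ μ j := by
  rw [← diagonal_apply_eq μ j, ← h, mul_apply]
  exact Finset.sum_nonneg fun i _ => mul_self_nonneg _

lemma mul_diagonal_eq_self_of_transpose_mul_self_eq_diagonal {Y : Matrix (Fin n) (Fin m) ℝ}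
    {μ : Fin m → ℝ} (h : Yᵀ * Y = diagonal μ) {w : Fin m → ℝ} (hw : ∀ j, μ j ≠ 0 → w j = 1) :
    Y * diagonal w = Y := by
  have hzero : Y * diagonal (fun j => w j - 1) = 0 := by
    rw [← conjTranspose_mul_self_eq_zero, conjTranspose_eq_transpose_of_trivial, transpose_mul,
      diagonal_transpose, Matrix.mul_assoc, ← Matrix.mul_assoc Yᵀ, h, diagonal_mul_diagonal,
      diagonal_mul_diagonal, ← diagonal_zero]
    congr 1
    ext j
    by_cases hj : μ j = 0 <;> simp [hj, hw]
  rwa [← diagonal_sub, diagonal_one, Matrix.mul_sub, Matrix.mul_one, sub_eq_zero] at hzero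

lemma sum_sqrt_le_of_transpose_mul_self_eq_diagonal {Y : Matrix (Fin n) (Fin m) ℝ}
    {μ : Fin m → ℝ} (hY : Yᵀ * Y = diagonal μ) {L : Matrix (Fin n) (Fin k) ℝ}
    {R : Matrix (Fin m) (Fin k) ℝ} (h : Y = L * Rᵀ) :
    ∑ j, √(μ j) ≤ (1 / 2) * (frobNorm L ^ 2 + frobNorm R ^ 2) := by
  have hσ : ∀ j, (√(μ j))⁻¹ * μ j = √(μ j) := fun j => by rw [← div_eq_inv_mul, Real.div_sqrt]
  -- `0⁻¹ = 0` makes `Y * D` vanish on the columns with `μ j = 0`: it is a partial isometry.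
  set D : Matrix (Fin m) (Fin m) ℝ := diagonal fun j => (√(μ j))⁻¹
  have hP : Y * D * (Y * D)ᵀ * (Y * D) = Y * D := by
    rw [show Y * D * (Y * D)ᵀ * (Y * D) = Y * (D * D * (Yᵀ * Y) * D) by
      simp only [D, transpose_mul, diagonal_transpose, Matrix.mul_assoc]]
    rw [hY]
    simp only [D, diagonal_mul_diagonal]
    congr 2
    ext j
    calc _ = (√(μ j))⁻¹ * ((√(μ j))⁻¹ * μ j) * (√(μ j))⁻¹ := by ring
      _ = _ := by rw [hσ]; simpa using mul_inv_mul_cancel (√(μ j))⁻¹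
  have hdiag : (Y * D)ᵀ * Y = diagonal fun j => √(μ j) := by
    rw [transpose_mul, diagonal_transpose, Matrix.mul_assoc, hY, diagonal_mul_diagonal]
    simp only [hσ]
  calc ∑ j, √(μ j) = ((Y * D)ᵀ * Y).trace := by rw [hdiag, trace_diagonal]
    _ = ((Y * D)ᵀ * L * Rᵀ).trace := by rw [Matrix.mul_assoc, ← h]
    _ ≤ (1 / 2) * (frobNorm ((Y * D)ᵀ * L) ^ 2 + frobNorm R ^ 2) := trace_mul_transpose_le _ _
    _ ≤ (1 / 2) * (frobNorm L ^ 2 + frobNorm R ^ 2) := by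
      have := frobNorm_transpose_mul_sq_le hP L
      linarith

lemma exists_balanced_factorization {X : Matrix (Fin n) (Fin m) ℝ} {Q : Matrix (Fin m) (Fin m) ℝ}
    {μ : Fin m → ℝ} (hQ : Qᵀ * Q = 1) (hXQ : (X * Q)ᵀ * (X * Q) = diagonal μ)
    (hk : (Finset.univ.filter fun j => μ j ≠ 0).card ≤ k) :
    ∃ (L : Matrix (Fin n) (Fin k) ℝ) (R : Matrix (Fin m) (Fin k) ℝ),
      X = L * Rᵀ ∧ (1 / 2) * (frobNorm L ^ 2 + frobNorm R ^ 2) = ∑ j, √(μ j) := by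
  set t : Fin m → ℝ := fun j => √(√(μ j))
  have ht : ∀ j, t j = 0 ↔ μ j = 0 := fun j => by
    simp [t, Real.sqrt_eq_zero, Real.sqrt_nonneg, nonneg_of_transpose_mul_self_eq_diagonal hXQ j]
  have hcol : ∀ {p} (M : Matrix (Fin p) (Fin m) ℝ) (w : Fin m → ℝ), (∀ j, μ j = 0 → w j = 0) →
      ∀ i, ∀ j ∉ Finset.univ.filter fun j => μ j ≠ 0, (M * diagonal w) i j = 0 := by
    intro p M w hw i j hj
    rw [mul_diagonal, hw j (by simpa using hj), mul_zero]
  obtain ⟨L, R, hLR, hL, hR⟩ := exists_factorization_of_columns_eq_zero hk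
    (hcol (X * Q) t⁻¹ fun j hj => by simp [(ht j).2 hj])
    (hcol Q t fun j hj => (ht j).2 hj)
  refine ⟨L, R, ?_, ?_⟩
  · have hXQt : X * Q * diagonal (fun j => t⁻¹ j * t j) = X * Q :=
      mul_diagonal_eq_self_of_transpose_mul_self_eq_diagonal hXQ fun j hj =>
        inv_mul_cancel₀ ((ht j).not.2 hj)
    calc X = X * Q * Qᵀ := by rw [Matrix.mul_assoc, mul_eq_one_comm.mp hQ, Matrix.mul_one]
      _ = X * Q * diagonal t⁻¹ * (Q * diagonal t)ᵀ := by
        rw [transpose_mul, diagonal_transpose, ← Matrix.mul_assoc, Matrix.mul_assoc (X * Q),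
          diagonal_mul_diagonal, hXQt]
      _ = L * Rᵀ := hLR.symm
  · rw [hL, hR, frobNorm_mul_diagonal_sq, frobNorm_mul_diagonal_sq, hXQ, hQ,
      ← Finset.sum_add_distrib, Finset.mul_sum]
    refine Finset.sum_congr rfl fun j _ => ?_
    have ht2 : t j ^ 2 = √(μ j) := Real.sq_sqrt (Real.sqrt_nonneg _)
    simp only [diagonal_apply_eq, one_apply_eq, Pi.inv_apply, inv_pow, ht2, inv_mul_eq_div,
      Real.div_sqrt]
    ring

lemma exists_orthogonal_transpose_mul_self_eq_diagonal (X : Matrix (Fin n) (Fin m) ℝ) :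
    ∃ Q : Matrix (Fin m) (Fin m) ℝ, Qᵀ * Q = 1 ∧
      (X * Q)ᵀ * (X * Q) = diagonal (isHermitian_conjTranspose_mul_self X).eigenvalues := by
  have hH := isHermitian_conjTranspose_mul_self X
  refine ⟨hH.eigenvectorUnitary, ?_, ?_⟩
  · simpa [star_eq_conjTranspose] using Unitary.coe_star_mul_self hH.eigenvectorUnitary
  · have h := hH.conjStarAlgAut_star_eigenvectorUnitary
    simp only [Unitary.conjStarAlgAut_star_apply, star_eq_conjTranspose,
      conjTranspose_eq_transpose_of_trivial] at h
    simpa [transpose_mul, Matrix.mul_assoc] using h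

end

/-- Let `X ∈ ℝ^{n×m}` and `k ≥ rank X`. Then the infimum of `(1/2)(‖L‖_F² + ‖R‖_F²)`
over all factorizations `X = L Rᵀ` with `L ∈ ℝ^{n×k}`, `R ∈ ℝ^{m×k}` is attained and
equals `‖X‖_*`. -/
theorem nucNorm_eq_min_factorization (n m k : ℕ) (X : Matrix (Fin n) (Fin m) ℝ)
    (hk : X.rank ≤ k) :
    IsLeast {c : ℝ | ∃ (L : Matrix (Fin n) (Fin k) ℝ) (R : Matrix (Fin m) (Fin k) ℝ),
        X = L * Rᵀ ∧ c = (1 / 2) * (frobNorm L ^ 2 + frobNorm R ^ 2)}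
      (nucNorm X) := by
  have hH := isHermitian_conjTranspose_mul_self X
  obtain ⟨Q, hQ, hXQ⟩ := exists_orthogonal_transpose_mul_self_eq_diagonal X
  have hcard : (Finset.univ.filter fun j => hH.eigenvalues j ≠ 0).card ≤ k := by
    rw [← Fintype.card_subtype, ← hH.rank_eq_card_non_zero_eigs,
      conjTranspose_eq_transpose_of_trivial, rank_transpose_mul_self]
    exact hk
  refine ⟨?_, ?_⟩
  · obtain ⟨L, R, hX, hval⟩ := exists_balanced_factorization hQ hXQ hcard
    exact ⟨L, R, hX, hval.symm⟩
  · rintro c ⟨L, R, hX, rfl⟩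
    have hY : X * Q = L * (Qᵀ * R)ᵀ := by
      rw [hX, transpose_mul, transpose_transpose, Matrix.mul_assoc]
    have hL := sum_sqrt_le_of_transpose_mul_self_eq_diagonal hXQ hY
    have hQ' : Q * Qᵀ * Q = Q := by rw [Matrix.mul_assoc, hQ, Matrix.mul_one]
    have hR := frobNorm_transpose_mul_sq_le hQ' R
    unfold nucNorm
    linarith
end

section
/- Let 𝒜 : ℝ^{n×m} → ℝ^q be a linear map, b ∈ ℝ^q, σ ≥ 0, and set k = min(n,m). If the feasible set {X : ‖𝒜(X) − b‖₂ ≤ σ} is nonempty, then the optimal value of the nuclear-norm Morozov problem inf{ ‖X‖_* : ‖𝒜(X) − b‖₂ ≤ σ } equals the optimal value of its factorized version inf{ (1/2)‖L‖_F² + (1/2)‖R‖_F² : L ∈ ℝ^{n×k}, R ∈ ℝ^{m×k}, ‖𝒜(L Rᵀ) − b‖₂ ≤ σ }. -/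
open Matrix

/-! Write `X = U Σ Vᵀ` with `V` the orthonormal eigenvectors of `Xᵀ X` and `Σ` the singular
values. For any factorization `X = L Rᵀ`, pairing with the left singular vectors `W` gives
`‖X‖_* = tr (Wᵀ L Rᵀ V) ≤ ½ ‖Lᵀ W‖_F² + ½ ‖Rᵀ V‖_F² ≤ ½ ‖L‖_F² + ½ ‖R‖_F²`, because `W` and `V`
are partial isometries. The balanced factors `L = U Σ^{-1/2}`, `R = V Σ^{1/2}` attain equality,
and factoring `Xᵀ` instead when `n < m` keeps the inner dimension at `min n m`. So every value
of one problem is bounded below by a value of the other. -/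

namespace Matrix

lemma col_eq_zero_of_transpose_mul_self_apply_eq_zero {m n : Type*} [Fintype m]
    {U : Matrix m n ℝ} {j : n} (h : (Uᵀ * U) j j = 0) (i : m) : U i j = 0 := by
  simp only [mul_apply, transpose_apply] at h
  exact (Finset.sum_mul_self_eq_zero_iff _ _).mp h i (Finset.mem_univ i)

variable {m n p : Type*} [Fintype m] [Fintype n] [Fintype p]

lemma trace_transpose_mul_self_nonneg (A : Matrix m n ℝ) : 0 ≤ trace (Aᵀ * A) :=
  (posSemidef_conjTranspose_mul_self A).trace_nonneg

lemma two_mul_trace_transpose_mul_le (A B : Matrix m n ℝ) :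
    2 * trace (Aᵀ * B) ≤ trace (Aᵀ * A) + trace (Bᵀ * B) := by
  have h := trace_transpose_mul_self_nonneg (A - B)
  rw [transpose_sub, Matrix.sub_mul, Matrix.mul_sub, Matrix.mul_sub, trace_sub, trace_sub,
    trace_sub, ← trace_transpose (Bᵀ * A), transpose_mul, transpose_transpose] at h
  linarith

def IsPartialIsometry (W : Matrix m n ℝ) : Prop := W * Wᵀ * W = W

lemma IsPartialIsometry.trace_mul_le {W : Matrix m p ℝ} (hW : W.IsPartialIsometry)
    (M : Matrix n m ℝ) : trace ((M * W)ᵀ * (M * W)) ≤ trace (M * Mᵀ) := by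
  have hMW : M * W * Wᵀ * W = M * W := by
    rw [Matrix.mul_assoc, Matrix.mul_assoc, ← Matrix.mul_assoc W, hW]
  -- `‖M‖_F² - ‖M W‖_F²` is the squared norm of the residual `M - M W Wᵀ`
  have hres : (M - M * W * Wᵀ) * (M - M * W * Wᵀ)ᵀ = M * Mᵀ - M * W * Wᵀ * Mᵀ := by
    simp only [transpose_sub, transpose_mul, transpose_transpose, Matrix.sub_mul,
      Matrix.mul_sub, ← Matrix.mul_assoc, hMW]
    abel
  have h := trace_transpose_mul_self_nonneg (M - M * W * Wᵀ)ᵀ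
  rw [transpose_transpose, hres, trace_sub] at h
  rw [transpose_mul, trace_mul_comm]
  simp only [← Matrix.mul_assoc]
  linarith

lemma isPartialIsometry_of_mul_transpose_eq_one [DecidableEq m] {V : Matrix m m ℝ}
    (hV : V * Vᵀ = 1) : V.IsPartialIsometry := by
  rw [IsPartialIsometry, hV, Matrix.one_mul]

variable [DecidableEq n]

lemma mul_diagonal_transpose_mul_mul_diagonal {U : Matrix m n ℝ} {d : n → ℝ}
    (hU : Uᵀ * U = diagonal d) (a b : n → ℝ) :
    (U * diagonal a)ᵀ * (U * diagonal b) = diagonal (fun j => a j * d j * b j) := by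
  rw [transpose_mul, diagonal_transpose, Matrix.mul_assoc, ← Matrix.mul_assoc Uᵀ, hU,
    diagonal_mul_diagonal, diagonal_mul_diagonal]
  simp only [mul_assoc]

section DiagonalScaling

variable {U : Matrix m n ℝ} {s : n → ℝ}

lemma mul_diagonal_inv_mul_self (hU : Uᵀ * U = diagonal fun j => s j ^ 2) {c : n → ℝ}
    (hc : ∀ j, c j = 0 → s j = 0) :
    U * diagonal (fun j => (c j)⁻¹ * c j) = U := by
  ext i j
  rw [mul_diagonal]
  by_cases hj : c j = 0
  · have hcol : (Uᵀ * U) j j = 0 := by simp [hU, hc j hj]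
    simp [col_eq_zero_of_transpose_mul_self_apply_eq_zero hcol i]
  · rw [inv_mul_cancel₀ hj, mul_one]

lemma mul_diagonal_inv_transpose_mul (hU : Uᵀ * U = diagonal fun j => s j ^ 2) :
    (U * diagonal fun j => (s j)⁻¹)ᵀ * U = diagonal s := by
  have h := mul_diagonal_transpose_mul_mul_diagonal hU (fun j => (s j)⁻¹) fun _ => 1
  rw [diagonal_one, Matrix.mul_one] at h
  rw [h]
  congr 1
  ext j
  by_cases hj : s j = 0 <;> field_simp [hj]

lemma isPartialIsometry_mul_diagonal_inv (hU : Uᵀ * U = diagonal fun j => s j ^ 2) :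
    (U * diagonal fun j => (s j)⁻¹).IsPartialIsometry := by
  rw [IsPartialIsometry, Matrix.mul_assoc, mul_diagonal_transpose_mul_mul_diagonal hU,
    Matrix.mul_assoc, diagonal_mul_diagonal]
  congr 2
  ext j
  by_cases hj : s j = 0 <;> field_simp [hj]

end DiagonalScaling

end Matrix

section SingularValues

variable {n m : ℕ} (X : Matrix (Fin n) (Fin m) ℝ)

noncomputable def rightSingularVectors : Matrix (Fin m) (Fin m) ℝ :=
  (isHermitian_conjTranspose_mul_self X).eigenvectorUnitary

noncomputable def singularValues (j : Fin m) : ℝ :=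
  √((isHermitian_conjTranspose_mul_self X).eigenvalues j)

lemma nucNorm_eq_sum_singularValues : nucNorm X = ∑ j, singularValues X j := rfl

lemma singularValues_nonneg (j : Fin m) : 0 ≤ singularValues X j := Real.sqrt_nonneg _

lemma rightSingularVectors_mul_transpose :
    rightSingularVectors X * (rightSingularVectors X)ᵀ = 1 :=
  mem_unitaryGroup_iff.mp (isHermitian_conjTranspose_mul_self X).eigenvectorUnitary.2

lemma transpose_mul_rightSingularVectors :
    (rightSingularVectors X)ᵀ * rightSingularVectors X = 1 :=
  mem_unitaryGroup_iff'.mp (isHermitian_conjTranspose_mul_self X).eigenvectorUnitary.2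

lemma transpose_mul_self_mul_rightSingularVectors :
    (X * rightSingularVectors X)ᵀ * (X * rightSingularVectors X) =
      diagonal fun j => singularValues X j ^ 2 := by
  have hH := isHermitian_conjTranspose_mul_self X
  have h := hH.conjStarAlgAut_star_eigenvectorUnitary
  rw [Unitary.conjStarAlgAut_apply, Unitary.coe_star, star_star] at h
  have hsq : ∀ j, singularValues X j ^ 2 = hH.eigenvalues j := fun j =>
    Real.sq_sqrt (eigenvalues_conjTranspose_mul_self_nonneg X j)
  simp only [hsq]
  rw [transpose_mul, Matrix.mul_assoc, ← Matrix.mul_assoc Xᵀ, ← Matrix.mul_assoc]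
  exact h

end SingularValues

lemma frobNorm_sq {n m : ℕ} (M : Matrix (Fin n) (Fin m) ℝ) :
    frobNorm M ^ 2 = trace (Mᵀ * M) := by
  rw [frobNorm, Real.sq_sqrt (by positivity), Finset.sum_comm]
  simp only [trace, diag, mul_apply, transpose_apply, sq]

noncomputable def factorCost {n m k : ℕ} (L : Matrix (Fin n) (Fin k) ℝ)
    (R : Matrix (Fin m) (Fin k) ℝ) : ℝ :=
  (1 / 2) * frobNorm L ^ 2 + (1 / 2) * frobNorm R ^ 2

lemma factorCost_comm {n m k : ℕ} (L : Matrix (Fin n) (Fin k) ℝ)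
    (R : Matrix (Fin m) (Fin k) ℝ) : factorCost R L = factorCost L R :=
  add_comm _ _

lemma frobNorm_submatrix_equiv {n k k' : ℕ} (L : Matrix (Fin n) (Fin k) ℝ)
    (e : Fin k' ≃ Fin k) :
    frobNorm (L.submatrix id e) = frobNorm L := by
  simp only [frobNorm, submatrix_apply, id]
  congr 1
  exact Finset.sum_congr rfl fun i _ => e.sum_comp fun j => L i j ^ 2

lemma factorCost_submatrix_equiv {n m k k' : ℕ} (L : Matrix (Fin n) (Fin k) ℝ)
    (R : Matrix (Fin m) (Fin k) ℝ) (e : Fin k' ≃ Fin k) :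
    factorCost (L.submatrix id e) (R.submatrix id e) = factorCost L R := by
  rw [factorCost, factorCost, frobNorm_submatrix_equiv, frobNorm_submatrix_equiv]

theorem nucNorm_mul_transpose_le {n m k : ℕ} (L : Matrix (Fin n) (Fin k) ℝ)
    (R : Matrix (Fin m) (Fin k) ℝ) : nucNorm (L * Rᵀ) ≤ factorCost L R := by
  have hU := transpose_mul_self_mul_rightSingularVectors (L * Rᵀ)
  set V := rightSingularVectors (L * Rᵀ)
  set s := singularValues (L * Rᵀ)
  -- the columns of `W` are the left singular vectors (and `0` where `s j = 0`, as `0⁻¹ = 0`)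
  set W := L * Rᵀ * V * diagonal fun j => (s j)⁻¹
  have hnuc : nucNorm (L * Rᵀ) = trace ((Lᵀ * W)ᵀ * (Rᵀ * V)) := by
    calc nucNorm (L * Rᵀ) = trace (diagonal s) := by rw [trace_diagonal]; rfl
      _ = trace (Wᵀ * (L * Rᵀ * V)) := by rw [mul_diagonal_inv_transpose_mul hU]
      _ = trace ((Lᵀ * W)ᵀ * (Rᵀ * V)) := by
        simp only [transpose_mul, transpose_transpose, Matrix.mul_assoc]
  have hcross := two_mul_trace_transpose_mul_le (Lᵀ * W) (Rᵀ * V)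
  have hL := (isPartialIsometry_mul_diagonal_inv hU).trace_mul_le Lᵀ
  have hR := (isPartialIsometry_of_mul_transpose_eq_one
    (rightSingularVectors_mul_transpose (L * Rᵀ))).trace_mul_le Rᵀ
  rw [transpose_transpose] at hL hR
  rw [factorCost, frobNorm_sq, frobNorm_sq, hnuc]
  linarith

theorem exists_factorCost_eq_nucNorm_of_square {n m : ℕ} (X : Matrix (Fin n) (Fin m) ℝ) :
    ∃ (L : Matrix (Fin n) (Fin m) ℝ) (R : Matrix (Fin m) (Fin m) ℝ),
      L * Rᵀ = X ∧ factorCost L R = nucNorm X := by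
  have hU := transpose_mul_self_mul_rightSingularVectors X
  set V := rightSingularVectors X
  set s := singularValues X
  have hV : Vᵀ * V = diagonal fun _ => 1 := by
    rw [transpose_mul_rightSingularVectors, diagonal_one]
  refine ⟨X * V * diagonal (fun j => (√(s j))⁻¹), V * diagonal (fun j => √(s j)), ?_, ?_⟩
  · calc
      X * V * diagonal (fun j => (√(s j))⁻¹) * (V * diagonal fun j => √(s j))ᵀ
          = X * V * diagonal (fun j => (√(s j))⁻¹ * √(s j)) * Vᵀ := by
        rw [transpose_mul, diagonal_transpose, ← Matrix.mul_assoc,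
          Matrix.mul_assoc (X * V), diagonal_mul_diagonal]
      _ = X * V * Vᵀ := by
        rw [mul_diagonal_inv_mul_self hU fun j hj =>
          (Real.sqrt_eq_zero (singularValues_nonneg X j)).mp hj]
      _ = X := by rw [Matrix.mul_assoc, rightSingularVectors_mul_transpose, Matrix.mul_one]
  · have hL : ∀ x : ℝ, 0 ≤ x → (√x)⁻¹ * x ^ 2 * (√x)⁻¹ = x := fun x hx => by
      rcases hx.eq_or_lt with rfl | hpos
      · simp
      · have hne : √x ≠ 0 := (Real.sqrt_pos.mpr hpos).ne'
        field_simp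
        rw [Real.sq_sqrt hx]
    have hLsum : ∑ j, (√(s j))⁻¹ * s j ^ 2 * (√(s j))⁻¹ = ∑ j, s j :=
      Finset.sum_congr rfl fun j _ => hL (s j) (singularValues_nonneg X j)
    have hRsum : ∑ j, √(s j) * 1 * √(s j) = ∑ j, s j :=
      Finset.sum_congr rfl fun j _ => by
        rw [mul_one, Real.mul_self_sqrt (singularValues_nonneg X j)]
    rw [factorCost, frobNorm_sq, frobNorm_sq, mul_diagonal_transpose_mul_mul_diagonal hU,
      mul_diagonal_transpose_mul_mul_diagonal hV, trace_diagonal, trace_diagonal, hLsum, hRsum,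
      nucNorm_eq_sum_singularValues]
    ring

lemma nucNorm_transpose_le {n m : ℕ} (X : Matrix (Fin n) (Fin m) ℝ) :
    nucNorm Xᵀ ≤ nucNorm X := by
  obtain ⟨L, R, hLR, hcost⟩ := exists_factorCost_eq_nucNorm_of_square X
  calc nucNorm Xᵀ = nucNorm (R * Lᵀ) := by rw [← hLR, transpose_mul, transpose_transpose]
    _ ≤ factorCost R L := nucNorm_mul_transpose_le R L
    _ = nucNorm X := by rw [factorCost_comm, hcost]

theorem nucNorm_transpose {n m : ℕ} (X : Matrix (Fin n) (Fin m) ℝ) :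
    nucNorm Xᵀ = nucNorm X := by
  refine le_antisymm (nucNorm_transpose_le X) ?_
  simpa only [transpose_transpose] using nucNorm_transpose_le Xᵀ

theorem exists_factorCost_eq_nucNorm {n m : ℕ} (X : Matrix (Fin n) (Fin m) ℝ) :
    ∃ (L : Matrix (Fin n) (Fin (min n m)) ℝ) (R : Matrix (Fin m) (Fin (min n m)) ℝ),
      L * Rᵀ = X ∧ factorCost L R = nucNorm X := by
  suffices ∃ (k : ℕ) (_ : Fin (min n m) ≃ Fin k) (L : Matrix (Fin n) (Fin k) ℝ)
      (R : Matrix (Fin m) (Fin k) ℝ), L * Rᵀ = X ∧ factorCost L R = nucNorm X by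
    obtain ⟨k, e, L, R, hLR, hcost⟩ := this
    refine ⟨L.submatrix id e, R.submatrix id e, ?_, by rw [factorCost_submatrix_equiv, hcost]⟩
    rw [transpose_submatrix, submatrix_mul_equiv, submatrix_id_id, hLR]
  rcases le_total n m with h | h
  · obtain ⟨L, R, hLR, hcost⟩ := exists_factorCost_eq_nucNorm_of_square Xᵀ
    refine ⟨n, finCongr (min_eq_left h), R, L, ?_,
      by rw [factorCost_comm, hcost, nucNorm_transpose]⟩
    rw [← transpose_transpose X, ← hLR, transpose_mul, transpose_transpose]
  · obtain ⟨L, R, hLR, hcost⟩ := exists_factorCost_eq_nucNorm_of_square X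
    exact ⟨m, finCongr (min_eq_right h), L, R, hLR, hcost⟩

theorem morozov_factorized_value_eq_general (n m q : ℕ)
    (A : Matrix (Fin n) (Fin m) ℝ →ₗ[ℝ] (Fin q → ℝ)) (b : Fin q → ℝ)
    (σ : ℝ) :
    sInf {c : ℝ | ∃ X : Matrix (Fin n) (Fin m) ℝ, l2 (A X - b) ≤ σ ∧ c = nucNorm X} =
      sInf {c : ℝ | ∃ (L : Matrix (Fin n) (Fin (min n m)) ℝ)
          (R : Matrix (Fin m) (Fin (min n m)) ℝ),
          l2 (A (L * Rᵀ) - b) ≤ σ ∧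
          c = (1 / 2) * frobNorm L ^ 2 + (1 / 2) * frobNorm R ^ 2} := by
  apply csInf_eq_csInf_of_forall_exists_le
  · rintro _ ⟨X, hX, rfl⟩
    obtain ⟨L, R, hLR, hcost⟩ := exists_factorCost_eq_nucNorm X
    exact ⟨_, ⟨L, R, hLR ▸ hX, rfl⟩, hcost.le⟩
  · rintro _ ⟨L, R, hLR, rfl⟩
    exact ⟨_, ⟨L * Rᵀ, hLR, rfl⟩, nucNorm_mul_transpose_le L R⟩

/-- Equality of the optimal values of the nuclear-norm Morozov problem and its
factorized version with inner dimension `k = min n m`, assuming the feasible set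
is nonempty. -/
theorem morozov_factorized_value_eq (n m q : ℕ)
    (A : Matrix (Fin n) (Fin m) ℝ →ₗ[ℝ] (Fin q → ℝ)) (b : Fin q → ℝ)
    (σ : ℝ) (hσ : 0 ≤ σ)
    (hfeas : ∃ X : Matrix (Fin n) (Fin m) ℝ, l2 (A X - b) ≤ σ) :
    sInf {c : ℝ | ∃ X : Matrix (Fin n) (Fin m) ℝ, l2 (A X - b) ≤ σ ∧ c = nucNorm X} =
      sInf {c : ℝ | ∃ (L : Matrix (Fin n) (Fin (min n m)) ℝ)
          (R : Matrix (Fin m) (Fin (min n m)) ℝ),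
          l2 (A (L * Rᵀ) - b) ≤ σ ∧
          c = (1 / 2) * frobNorm L ^ 2 + (1 / 2) * frobNorm R ^ 2} :=
  morozov_factorized_value_eq_general n m q A b σ
end
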